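/- arXiv:1604.03439 — 4 statements merged into one kernel-verified Lean document; each statement's English description precedes it below -/
import Mathlib

section
/- For every integer n ≥ 2, the cubic partition function satisfies a(n+2) + a(n−2) > 2·a(n). -/
/-!
Write `p` for the partition function and `q(m)` for the number of partitions of `m` with no
part `2`. Removing one part `2` shows `p(m + 2) = p(m) + q(m + 2)`, and adding a part `1` injects
the partitions counted by `q(m)` into those counted by `q(m + 1)`, missing the one-part
partition once `m ≥ 2`. Hence `q` is strictly increasing from `2` on and `p` is strictly convex
with step `2`.
Since `a(n) = ∑_{2j ≤ n} p(j) p(n - 2j)`, the second difference of `a` with step `2` is a sum of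
positive multiples of second differences of `p`, plus a boundary term that is nonnegative because
`p` is monotone.
-/

/-- The cubic partition function: `a(n) = ∑_{j=0}^{⌊n/2⌋} p(j)·p(n−2j)`,
the number of partitions of `n` in which even parts come in two colors. -/
noncomputable def cubicPartition (n : ℕ) : ℕ :=
  ∑ j ∈ Finset.range (n / 2 + 1),
    Fintype.card (Nat.Partition j) * Fintype.card (Nat.Partition (n - 2 * j))

open Finset

namespace Nat.Partition

def consOne {n : ℕ} (π : n.Partition) : (n + 1).Partition where
  parts := 1 ::ₘ π.parts
  parts_pos hi := by
    rcases Multiset.mem_cons.1 hi with rfl | h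
    · exact Nat.one_pos
    · exact π.parts_pos h
  parts_sum := by rw [Multiset.sum_cons, π.parts_sum, add_comm]

theorem consOne_injective {n : ℕ} : Function.Injective (consOne (n := n)) := fun _ _ h =>
  Nat.Partition.ext <| (Multiset.cons_inj_right 1).1 (congrArg Nat.Partition.parts h)

theorem monotone_card : Monotone fun n : ℕ => Fintype.card n.Partition :=
  monotone_nat_of_le_succ fun _ => Fintype.card_le_of_injective _ consOne_injective

theorem card_add_eq_card_add_card_notMem {a : ℕ} (ha : 1 ≤ a) (m : ℕ) :
    Fintype.card (m + a).Partition =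
      Fintype.card m.Partition + Fintype.card {π : (m + a).Partition // a ∉ π.parts} := by
  have hmem :
      Fintype.card {π : (m + a).Partition // a ∈ π.parts} = Fintype.card m.Partition := by
    simpa using Fintype.card_congr (partitionWithPartEquiv ha (Nat.le_add_left a m))
  rw [Fintype.card_subtype_compl, hmem]
  have := Fintype.card_subtype_le fun π : (m + a).Partition => a ∈ π.parts
  omega

theorem card_notMem_lt_card_succ_notMem {a n : ℕ} (ha : 1 < a) (hn : a ≤ n) :
    Fintype.card {π : n.Partition // a ∉ π.parts} <
      Fintype.card {π : (n + 1).Partition // a ∉ π.parts} := by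
  refine Fintype.card_lt_of_injective_of_notMem
    (fun π => ⟨consOne π.1, by simp [consOne, π.2, ha.ne']⟩)
    (fun _ _ h => Subtype.ext (consOne_injective (congrArg Subtype.val h)))
    (b := ⟨indiscrete (n + 1), by simp [indiscrete_parts]; omega⟩) ?_
  rintro ⟨π, hπ⟩
  have h1 : 1 ∈ (indiscrete (n + 1)).parts := by
    rw [← congrArg (fun σ => σ.1.parts) hπ]
    exact Multiset.mem_cons_self 1 _
  simp [indiscrete_parts] at h1
  omega

theorem two_mul_card_add_two_lt (k : ℕ) :
    2 * Fintype.card (k + 2).Partition <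
      Fintype.card (k + 4).Partition + Fintype.card k.Partition := by
  let q (m : ℕ) := Fintype.card {π : m.Partition // 2 ∉ π.parts}
  have h4 : Fintype.card (k + 4).Partition = Fintype.card (k + 2).Partition + q (k + 4) :=
    card_add_eq_card_add_card_notMem one_le_two (k + 2)
  have h2 : Fintype.card (k + 2).Partition = Fintype.card k.Partition + q (k + 2) :=
    card_add_eq_card_add_card_notMem one_le_two k
  have h23 : q (k + 2) < q (k + 3) := card_notMem_lt_card_succ_notMem one_lt_two (by omega)
  have h34 : q (k + 3) < q (k + 4) := card_notMem_lt_card_succ_notMem one_lt_two (by omega)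
  omega

end Nat.Partition

section DilatedConv

variable (f g : ℕ → ℕ)

/-- The coefficient of `x ^ n` in `F(x²) G(x)`, where `F` and `G` are the generating functions of
`f` and `g`. -/
def dilatedConv (n : ℕ) : ℕ := ∑ j ∈ range (n / 2 + 1), f j * g (n - 2 * j)

theorem dilatedConv_add_two (n : ℕ) :
    dilatedConv f g (n + 2) =
      ∑ j ∈ range (n / 2 + 1), f j * g (n - 2 * j + 2) + f (n / 2 + 1) * g (n % 2) := by
  rw [dilatedConv, show (n + 2) / 2 + 1 = n / 2 + 1 + 1 by omega, sum_range_succ,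
    show n + 2 - 2 * (n / 2 + 1) = n % 2 by omega]
  congr 1
  refine sum_congr rfl fun j hj => ?_
  rw [show n + 2 - 2 * j = n - 2 * j + 2 by have := mem_range.1 hj; omega]

theorem dilatedConv_add_four (n : ℕ) :
    dilatedConv f g (n + 4) =
      ∑ j ∈ range (n / 2 + 1), f j * g (n - 2 * j + 4) + f (n / 2 + 1) * g (n % 2 + 2) +
        f (n / 2 + 2) * g (n % 2) := by
  rw [dilatedConv_add_two f g (n + 2), show (n + 2) / 2 + 1 = n / 2 + 1 + 1 by omega,
    sum_range_succ, show (n + 2) % 2 = n % 2 by omega,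
    show n + 2 - 2 * (n / 2 + 1) + 2 = n % 2 + 2 by omega]
  congr 2
  refine sum_congr rfl fun j hj => ?_
  rw [show n + 2 - 2 * j + 2 = n - 2 * j + 4 by have := mem_range.1 hj; omega]

variable {f g}

theorem two_mul_dilatedConv_add_two_lt (hf₀ : 0 < f 0) (hf : Monotone f) (hg : Monotone g)
    (hg₂ : ∀ m, 2 * g (m + 2) < g (m + 4) + g m) (k : ℕ) :
    2 * dilatedConv f g (k + 2) < dilatedConv f g (k + 4) + dilatedConv f g k := by
  have hsum : ∑ j ∈ range (k / 2 + 1), 2 * (f j * g (k - 2 * j + 2)) <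
      ∑ j ∈ range (k / 2 + 1), (f j * g (k - 2 * j + 4) + f j * g (k - 2 * j)) := by
    refine sum_lt_sum (fun j _ => ?_) ⟨0, mem_range.2 (k / 2).succ_pos, ?_⟩
    · rw [mul_left_comm, ← mul_add]
      exact Nat.mul_le_mul_left _ (hg₂ _).le
    · rw [mul_left_comm, ← mul_add]
      exact Nat.mul_lt_mul_of_pos_left (hg₂ _) hf₀
  have hboundary : 2 * (f (k / 2 + 1) * g (k % 2)) ≤
      f (k / 2 + 1) * g (k % 2 + 2) + f (k / 2 + 2) * g (k % 2) := by
    have h₁ : f (k / 2 + 1) * g (k % 2) ≤ f (k / 2 + 1) * g (k % 2 + 2) :=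
      Nat.mul_le_mul_left _ (hg (Nat.le_add_right _ _))
    have h₂ : f (k / 2 + 1) * g (k % 2) ≤ f (k / 2 + 2) * g (k % 2) :=
      Nat.mul_le_mul_right _ (hf (Nat.le_succ _))
    omega
  rw [← mul_sum, sum_add_distrib] at hsum
  rw [dilatedConv_add_two, dilatedConv_add_four, dilatedConv]
  omega

end DilatedConv

theorem cubicPartition_eq_dilatedConv :
    cubicPartition = dilatedConv (fun n => Fintype.card n.Partition)
      (fun n => Fintype.card n.Partition) :=
  rfl

theorem cubicPartition_convex (n : ℕ) (hn : 2 ≤ n) :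
    cubicPartition (n + 2) + cubicPartition (n - 2) > 2 * cubicPartition n := by
  obtain ⟨k, rfl⟩ := Nat.exists_eq_add_of_le' hn
  rw [Nat.add_sub_cancel, cubicPartition_eq_dilatedConv]
  exact two_mul_dilatedConv_add_two_lt Fintype.card_pos Nat.Partition.monotone_card
    Nat.Partition.monotone_card Nat.Partition.two_mul_card_add_two_lt k
end

section
/- For every positive integer n, the cubic partition function satisfies a(n) < exp(π·√n). -/
open Finset Real

theorem Finset.prod_sum_eq_sum_finsupp {ι α R : Type*} [Zero α] [CommSemiring R]
    (s : Finset ι) (t : ι → Finset α) (g : ι → α → R) :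
    ∏ i ∈ s, ∑ a ∈ t i, g i a = ∑ f ∈ s.finsupp t, ∏ i ∈ s, g i (f i) := by
  classical
  rw [prod_sum, Finset.finsupp, sum_map]
  refine sum_congr rfl fun f _ => ?_
  rw [← prod_attach s]
  exact prod_congr rfl fun i _ => by simp [Finsupp.indicator_of_mem i.2]

namespace Nat.Partition

variable {k : ℕ} (p : k.Partition)

theorem parts_toFinset_subset_Icc : p.parts.toFinset ⊆ Icc 1 k := fun i hi => by
  rw [Multiset.mem_toFinset] at hi
  exact mem_Icc.2 ⟨p.parts_pos hi, p.le_of_mem_parts hi⟩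

theorem count_parts_le (i : ℕ) : p.parts.count i ≤ k := by
  have h := Multiset.card_nsmul_le_sum (a := 1) fun _ hx => p.parts_pos hx
  rw [smul_eq_mul, mul_one, p.parts_sum] at h
  exact (Multiset.count_le_card i p.parts).trans h

theorem sum_mul_count_parts {s : Finset ℕ} (hs : p.parts.toFinset ⊆ s) :
    ∑ i ∈ s, i * p.parts.count i = k := by
  rw [← sum_subset hs fun i _ hi => by rw [Multiset.count_eq_zero_of_notMem (by simpa using hi),
    mul_zero]]
  conv_rhs => rw [← p.parts_sum, sum_multiset_count]
  exact sum_congr rfl fun i _ => by rw [smul_eq_mul, mul_comm]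

end Nat.Partition

theorem sum_card_partition_mul_pow_le_prod_geom_sum {R : Type*} [CommSemiring R]
    [PartialOrder R] [IsOrderedRing R] {x : R} (hx : 0 ≤ x) (N : ℕ) :
    ∑ k ∈ range (N + 1), (Fintype.card k.Partition : R) * x ^ k ≤
      ∏ i ∈ Icc 1 N, ∑ m ∈ range (N + 1), (x ^ i) ^ m := by
  set S := (Icc 1 N).finsupp fun _ => range (N + 1)
  set weight : (ℕ →₀ ℕ) → ℕ := fun f => ∑ i ∈ Icc 1 N, i * f i
  -- A partition of `k ≤ N` is determined by its multiplicities, a point of `S` of weight `k`.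
  have hcard : ∀ k ∈ range (N + 1), Fintype.card k.Partition ≤ #{f ∈ S | weight f = k} := by
    intro k hk
    have hkN : k ≤ N := Nat.lt_succ_iff.1 (mem_range.1 hk)
    have hsub (p : k.Partition) : p.parts.toFinset ⊆ Icc 1 N :=
      p.parts_toFinset_subset_Icc.trans (Icc_subset_Icc_right hkN)
    refine card_le_card_of_injOn (fun p => Multiset.toFinsupp p.parts) (fun p _ => ?_)
      fun p _ q _ h => Nat.Partition.ext (Multiset.toFinsupp.injective h)
    simp only [coe_filter, Set.mem_ofPred_eq, mem_finsupp_iff, Multiset.toFinsupp_support,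
      Multiset.toFinsupp_apply, mem_range, S, weight]
    exact ⟨⟨hsub p, fun i _ => Nat.lt_succ_of_le ((p.count_parts_le i).trans hkN)⟩,
      p.sum_mul_count_parts (hsub p)⟩
  calc ∑ k ∈ range (N + 1), (Fintype.card k.Partition : R) * x ^ k
      ≤ ∑ k ∈ range (N + 1), (#{f ∈ S | weight f = k} : R) * x ^ k := by
        gcongr with k hk
        exact hcard k hk
    _ = ∑ k ∈ range (N + 1), ∑ f ∈ S with weight f = k, x ^ weight f := by
        refine sum_congr rfl fun k _ => ?_
        rw [sum_congr rfl fun f hf => by rw [(mem_filter.1 hf).2], sum_const, nsmul_eq_mul]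
    _ ≤ ∑ f ∈ S, x ^ weight f :=
        sum_fiberwise_le_sum_of_sum_fiber_nonneg fun _ _ => sum_nonneg fun _ _ => pow_nonneg hx _
    _ = ∏ i ∈ Icc 1 N, ∑ m ∈ range (N + 1), (x ^ i) ^ m := by
        rw [prod_sum_eq_sum_finsupp]
        exact sum_congr rfl fun f _ => by simp only [weight, ← pow_mul, prod_pow_eq_pow_sum]

theorem succ_mul_pow_mul_one_sub_le {x : ℝ} (h0 : 0 ≤ x) (h1 : x ≤ 1) (k : ℕ) :
    (k + 1) * x ^ k * (1 - x) ≤ 1 - x ^ (k + 1) := by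
  rw [← mul_neg_geom_sum, mul_comm]
  gcongr
  calc (k + 1) * x ^ k = ∑ _j ∈ range (k + 1), x ^ k := by simp
    _ ≤ ∑ j ∈ range (k + 1), x ^ j :=
      sum_le_sum fun j hj => pow_le_pow_of_le_one h0 h1 (Nat.lt_succ_iff.1 (mem_range.1 hj))

theorem sum_Icc_pow_pow_div_le {x : ℝ} (h0 : 0 ≤ x) (h1 : x < 1) (N k : ℕ) :
    ∑ i ∈ Icc 1 N, (x ^ i) ^ (k + 1) / (k + 1) ≤ x / (1 - x) * (1 / ((k : ℝ) + 1) ^ 2) := by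
  have hy0 : 0 ≤ x ^ (k + 1) := pow_nonneg h0 _
  have hy1 : x ^ (k + 1) < 1 := pow_lt_one₀ h0 h1 k.succ_ne_zero
  have hgeom : ∑ i ∈ Icc 1 N, (x ^ (k + 1)) ^ i ≤ x ^ (k + 1) / (1 - x ^ (k + 1)) := by
    simpa [← Ico_add_one_right_eq_Icc] using
      geom_sum_Ico_le_of_lt_one (m := 1) (n := N + 1) hy0 hy1
  have hratio : x ^ (k + 1) / (1 - x ^ (k + 1)) ≤ x / ((k + 1) * (1 - x)) := by
    rw [div_le_div_iff₀ (by linarith) (mul_pos k.cast_add_one_pos (by linarith))]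
    have := succ_mul_pow_mul_one_sub_le h0 h1.le k
    calc x ^ (k + 1) * ((k + 1) * (1 - x)) = x * ((k + 1) * x ^ k * (1 - x)) := by ring
      _ ≤ x * (1 - x ^ (k + 1)) := by gcongr
  calc ∑ i ∈ Icc 1 N, (x ^ i) ^ (k + 1) / (k + 1)
      = (∑ i ∈ Icc 1 N, (x ^ (k + 1)) ^ i) / (k + 1) := by
        rw [sum_div]
        exact sum_congr rfl fun i _ => by rw [← pow_mul, ← pow_mul, mul_comm]
    _ ≤ x / ((k + 1) * (1 - x)) / (k + 1) := by gcongr; exact hgeom.trans hratio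
    _ = x / (1 - x) * (1 / ((k : ℝ) + 1) ^ 2) := by field_simp

theorem hasSum_one_div_nat_add_one_sq :
    HasSum (fun k : ℕ => 1 / ((k : ℝ) + 1) ^ 2) (π ^ 2 / 6) := by
  simpa using (hasSum_nat_add_iff' 1).2 hasSum_zeta_two

theorem sum_neg_log_one_sub_pow_le {x : ℝ} (h0 : 0 ≤ x) (h1 : x < 1) (N : ℕ) :
    ∑ i ∈ Icc 1 N, -log (1 - x ^ i) ≤ π ^ 2 / 6 * (x / (1 - x)) := by
  have hlog : HasSum (fun k : ℕ => ∑ i ∈ Icc 1 N, (x ^ i) ^ (k + 1) / (k + 1))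
      (∑ i ∈ Icc 1 N, -log (1 - x ^ i)) := by
    refine hasSum_sum fun i hi => hasSum_pow_div_log_of_abs_lt_one ?_
    rw [abs_of_nonneg (pow_nonneg h0 i)]
    exact pow_lt_one₀ h0 h1 (by have := (mem_Icc.1 hi).1; omega)
  rw [mul_comm]
  exact hasSum_le (sum_Icc_pow_pow_div_le h0 h1 N) hlog
    (hasSum_one_div_nat_add_one_sq.mul_left _)

theorem prod_inv_one_sub_pow_le_exp {x : ℝ} (h0 : 0 ≤ x) (h1 : x < 1) (N : ℕ) :
    ∏ i ∈ Icc 1 N, (1 - x ^ i)⁻¹ ≤ exp (π ^ 2 / 6 * (x / (1 - x))) := by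
  have hpos (i : ℕ) (hi : i ∈ Icc 1 N) : 0 < 1 - x ^ i :=
    sub_pos.2 (pow_lt_one₀ h0 h1 (by have := (mem_Icc.1 hi).1; omega))
  calc ∏ i ∈ Icc 1 N, (1 - x ^ i)⁻¹ = ∏ i ∈ Icc 1 N, exp (-log (1 - x ^ i)) :=
        prod_congr rfl fun i hi => by rw [exp_neg, exp_log (hpos i hi)]
    _ = exp (∑ i ∈ Icc 1 N, -log (1 - x ^ i)) := (exp_sum _ _).symm
    _ ≤ exp (π ^ 2 / 6 * (x / (1 - x))) := exp_le_exp.2 (sum_neg_log_one_sub_pow_le h0 h1 N)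

theorem sum_card_partition_mul_pow_le_exp {x : ℝ} (h0 : 0 ≤ x) (h1 : x < 1) (N : ℕ) :
    ∑ k ∈ range (N + 1), (Fintype.card k.Partition : ℝ) * x ^ k ≤
      exp (π ^ 2 / 6 * (x / (1 - x))) := by
  refine (sum_card_partition_mul_pow_le_prod_geom_sum h0 N).trans
    (le_trans ?_ (prod_inv_one_sub_pow_le_exp h0 h1 N))
  refine prod_le_prod (fun i _ => sum_nonneg fun m _ => by positivity) fun i hi => ?_
  have hxi : x ^ i < 1 := pow_lt_one₀ h0 h1 (by have := (mem_Icc.1 hi).1; omega)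
  exact sum_le_hasSum _ (fun m _ => by positivity) (hasSum_geometric_of_lt_one (by positivity) hxi)

theorem cubicPartition_mul_pow_le {x : ℝ} (h0 : 0 ≤ x) (h1 : x < 1) (n : ℕ) :
    cubicPartition n * x ^ n ≤
      exp (π ^ 2 / 6 * (x ^ 2 / (1 - x ^ 2))) * exp (π ^ 2 / 6 * (x / (1 - x))) := by
  have hterm (k : ℕ) :
      (Fintype.card k.Partition : ℝ) * x ^ k ≤ exp (π ^ 2 / 6 * (x / (1 - x))) := by
    have := single_le_sum (f := fun i => (Fintype.card i.Partition : ℝ) * x ^ i)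
      (fun i _ => mul_nonneg (Nat.cast_nonneg _) (pow_nonneg h0 i)) (self_mem_range_succ k)
    exact this.trans (sum_card_partition_mul_pow_le_exp h0 h1 k)
  calc (cubicPartition n : ℝ) * x ^ n
      = ∑ j ∈ range (n / 2 + 1), (Fintype.card j.Partition : ℝ) * (x ^ 2) ^ j *
          ((Fintype.card (n - 2 * j).Partition : ℝ) * x ^ (n - 2 * j)) := by
        rw [cubicPartition, Nat.cast_sum, sum_mul]
        refine sum_congr rfl fun j hj => ?_
        have h2j : 2 * j ≤ n := by have := mem_range.1 hj; omega
        rw [Nat.cast_mul, ← pow_mul, mul_mul_mul_comm, ← pow_add, Nat.add_sub_cancel' h2j]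
    _ ≤ ∑ j ∈ range (n / 2 + 1), (Fintype.card j.Partition : ℝ) * (x ^ 2) ^ j *
          exp (π ^ 2 / 6 * (x / (1 - x))) := by
        gcongr with j
        exact hterm _
    _ ≤ _ := by
        rw [← sum_mul]
        exact mul_le_mul_of_nonneg_right
          (sum_card_partition_mul_pow_le_exp (by positivity) (by nlinarith) (n / 2)) (exp_pos _).le

theorem exp_neg_div_one_sub_exp_neg_lt {s : ℝ} (hs : 0 < s) :
    exp (-s) / (1 - exp (-s)) < 1 / s := by
  have hexp : s + 1 < exp s := add_one_lt_exp hs.ne'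
  have hrewrite : exp (-s) / (1 - exp (-s)) = 1 / (exp s - 1) := by
    rw [exp_neg]
    field_simp
  rw [hrewrite]
  exact one_div_lt_one_div_of_lt hs (by linarith)

theorem cubicPartition_lt_exp (n : ℕ) {s : ℝ} (hs : 0 < s) :
    (cubicPartition n : ℝ) < exp (s * n + π ^ 2 / (4 * s)) := by
  have hbound :=
    cubicPartition_mul_pow_le (exp_pos (-s)).le (exp_lt_one_iff.2 (neg_lt_zero.2 hs)) n
  rw [← exp_nat_mul, ← exp_nat_mul, ← exp_add, Nat.cast_ofNat] at hbound
  simp only [mul_neg] at hbound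
  have hexponent : π ^ 2 / 6 * (exp (-(2 * s)) / (1 - exp (-(2 * s)))) +
      π ^ 2 / 6 * (exp (-s) / (1 - exp (-s))) < π ^ 2 / (4 * s) := by
    have h1 := exp_neg_div_one_sub_exp_neg_lt hs
    have h2 := exp_neg_div_one_sub_exp_neg_lt (mul_pos two_pos hs)
    calc _ < π ^ 2 / 6 * (1 / (2 * s)) + π ^ 2 / 6 * (1 / s) := by gcongr
      _ = π ^ 2 / (4 * s) := by field_simp; ring
  calc (cubicPartition n : ℝ) = cubicPartition n * exp (-(n * s)) * exp (s * n) := by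
        rw [mul_assoc, ← exp_add]; ring_nf; simp
    _ < exp (π ^ 2 / (4 * s)) * exp (s * n) := by
        gcongr
        exact hbound.trans_lt (exp_lt_exp.2 hexponent)
    _ = exp (s * n + π ^ 2 / (4 * s)) := by rw [← exp_add, add_comm]

open Real in
theorem cubicPartition_upper_bound (n : ℕ) (hn : 0 < n) :
    (cubicPartition n : ℝ) < Real.exp (π * Real.sqrt n) := by
  have hsqrt : 0 < √(n : ℝ) := sqrt_pos.2 (Nat.cast_pos.2 hn)
  convert cubicPartition_lt_exp n (div_pos pi_pos (mul_pos two_pos hsqrt)) using 2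
  field_simp
  rw [sq_sqrt (Nat.cast_nonneg n)]
  ring
end

section
/- For every real number x with 0 < x < 1, log F(x) ≤ (π²/4)·x/(1−x), where F(x) = ∏_{i=1}^∞ 1/((1−x^i)(1−x^{2i})). -/
/-- The generating function of the cubic partition function,
`F(x) = ∏_{i=1}^∞ 1/((1−x^i)(1−x^{2i}))`, for real `0 < x < 1`. -/
noncomputable def cubicGenFun (x : ℝ) : ℝ :=
  ∏' i : ℕ, 1 / ((1 - x ^ (i + 1)) * (1 - x ^ (2 * (i + 1))))

/-!
Writing `-log (1 - y ^ i) = ∑ₙ y ^ (i * n) / n` and summing the resulting double series in the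
other order gives `∑ᵢ -log (1 - y ^ i) = ∑ₙ y ^ n / (n (1 - y ^ n))`. Since
`1 - y ^ n ≥ n y ^ (n - 1) (1 - y)`, each term is at most `y / (1 - y) / n ^ 2`, so the sum is at
most `ζ(2) · y / (1 - y)`. Applied to `y = x` and `y = x ^ 2`, together with
`x ^ 2 / (1 - x ^ 2) ≤ x / (1 - x) / 2`, this bounds `log F(x)` by `(1 + 1/2) ζ(2) · x / (1 - x)`.
-/

open Real Finset

section
variable {y : ℝ}

lemma one_sub_pow_succ_pos (h0 : 0 ≤ y) (h1 : y < 1) (n : ℕ) : 0 < 1 - y ^ (n + 1) :=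
  sub_pos.2 (pow_lt_one₀ h0 h1 n.succ_ne_zero)

lemma succ_mul_pow_le_geom_sum (h0 : 0 ≤ y) (h1 : y ≤ 1) (n : ℕ) :
    ((n : ℝ) + 1) * y ^ n ≤ ∑ k ∈ range (n + 1), y ^ k := by
  simpa [nsmul_eq_mul, add_comm] using card_nsmul_le_sum (range (n + 1)) (y ^ ·) (y ^ n)
    fun k hk => pow_le_pow_of_le_one h0 h1 (Nat.lt_succ_iff.mp (mem_range.mp hk))

lemma pow_succ_div_one_sub_pow_succ_le (h0 : 0 ≤ y) (h1 : y < 1) (n : ℕ) :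
    y ^ (n + 1) / (1 - y ^ (n + 1)) ≤ y / (1 - y) / ((n : ℝ) + 1) := by
  have hgeom : ((n : ℝ) + 1) * y ^ n * (1 - y) ≤ 1 - y ^ (n + 1) := by
    rw [← geom_sum_mul_neg]
    exact mul_le_mul_of_nonneg_right (succ_mul_pow_le_geom_sum h0 h1.le n) (by linarith)
  rw [div_div, div_le_div_iff₀ (one_sub_pow_succ_pos h0 h1 n) (by positivity)]
  calc y ^ (n + 1) * ((1 - y) * ((n : ℝ) + 1)) = y * (((n : ℝ) + 1) * y ^ n * (1 - y)) := by ring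
    _ ≤ y * (1 - y ^ (n + 1)) := mul_le_mul_of_nonneg_left hgeom h0

lemma summable_pow_mul_div_succ (h0 : 0 ≤ y) (h1 : y < 1) :
    Summable fun p : ℕ × ℕ => y ^ ((p.1 + 1) * (p.2 + 1)) / ((p.2 : ℝ) + 1) := by
  have hgeom := summable_geometric_of_lt_one h0 h1
  refine (hgeom.mul_of_nonneg hgeom (fun _ => by positivity) fun _ => by positivity).of_nonneg_of_le
    (fun _ => by positivity) fun p => ?_
  calc y ^ ((p.1 + 1) * (p.2 + 1)) / ((p.2 : ℝ) + 1) ≤ y ^ ((p.1 + 1) * (p.2 + 1)) :=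
        div_le_self (by positivity) (by simp)
    _ ≤ y ^ (p.1 + p.2) := pow_le_pow_of_le_one h0 h1.le (by nlinarith)
    _ = y ^ p.1 * y ^ p.2 := pow_add y p.1 p.2

lemma hasSum_neg_log_one_sub_pow_succ (h0 : 0 ≤ y) (h1 : y < 1) :
    HasSum (fun i : ℕ => -log (1 - y ^ (i + 1)))
      (∑' n : ℕ, y ^ (n + 1) / (1 - y ^ (n + 1)) / ((n : ℝ) + 1)) := by
  have hpow : ∀ k : ℕ, y ^ (k + 1) < 1 := fun k => pow_lt_one₀ h0 h1 k.succ_ne_zero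
  have hsum := (summable_pow_mul_div_succ h0 h1).hasSum
  have hrows : ∀ i : ℕ, HasSum (fun n : ℕ => y ^ ((i + 1) * (n + 1)) / ((n : ℝ) + 1))
      (-log (1 - y ^ (i + 1))) := fun i => by
    simpa only [pow_mul] using
      hasSum_pow_div_log_of_abs_lt_one (by rw [abs_of_nonneg (by positivity)]; exact hpow i)
  have hcols : ∀ n : ℕ, HasSum (fun i : ℕ => y ^ ((i + 1) * (n + 1)) / ((n : ℝ) + 1))
      (y ^ (n + 1) / (1 - y ^ (n + 1)) / ((n : ℝ) + 1)) := fun n => by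
    have hterm : ∀ i : ℕ, y ^ ((i + 1) * (n + 1)) = y ^ (n + 1) * (y ^ (n + 1)) ^ i := fun i => by
      rw [← pow_succ', ← pow_mul, mul_comm (n + 1)]
    simp only [hterm, div_eq_mul_inv (y ^ (n + 1))]
    exact ((hasSum_geometric_of_lt_one (by positivity) (hpow n)).mul_left _).div_const _
  have hcol_sum : HasSum (fun n : ℕ => y ^ (n + 1) / (1 - y ^ (n + 1)) / ((n : ℝ) + 1))
      (∑' p : ℕ × ℕ, y ^ ((p.1 + 1) * (p.2 + 1)) / ((p.2 : ℝ) + 1)) :=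
    ((Equiv.prodComm ℕ ℕ).hasSum_iff.mpr hsum).prod_fiberwise hcols
  rw [hcol_sum.tsum_eq]
  exact hsum.prod_fiberwise hrows

lemma tsum_neg_log_one_sub_pow_succ_le (h0 : 0 ≤ y) (h1 : y < 1) :
    ∑' i : ℕ, -log (1 - y ^ (i + 1)) ≤ π ^ 2 / 6 * (y / (1 - y)) := by
  have hBasel : HasSum (fun n : ℕ => 1 / ((n : ℝ) + 1) ^ 2) (π ^ 2 / 6) := by
    simpa using (hasSum_nat_add_iff' (f := fun n : ℕ => (1 : ℝ) / (n : ℝ) ^ 2) 1).mpr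
      hasSum_zeta_two
  have hterm : ∀ n : ℕ, y ^ (n + 1) / (1 - y ^ (n + 1)) / ((n : ℝ) + 1) ≤
      y / (1 - y) * (1 / ((n : ℝ) + 1) ^ 2) := fun n => by
    calc _ ≤ y / (1 - y) / ((n : ℝ) + 1) / ((n : ℝ) + 1) :=
          div_le_div_of_nonneg_right (pow_succ_div_one_sub_pow_succ_le h0 h1 n) (by positivity)
      _ = _ := by rw [div_div, ← sq, div_eq_mul_one_div]
  have hnonneg : ∀ n : ℕ, 0 ≤ y ^ (n + 1) / (1 - y ^ (n + 1)) / ((n : ℝ) + 1) := fun n =>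
    div_nonneg (div_nonneg (by positivity) (one_sub_pow_succ_pos h0 h1 n).le) (by positivity)
  have hmajor := (hBasel.mul_left (y / (1 - y))).summable
  rw [(hasSum_neg_log_one_sub_pow_succ h0 h1).tsum_eq, ← hBasel.tsum_eq, mul_comm, ← tsum_mul_left]
  exact (hmajor.of_nonneg_of_le hnonneg hterm).tsum_le_tsum hterm hmajor

end

lemma log_cubicGenFun_eq {x : ℝ} (h0 : 0 ≤ x) (h1 : x < 1) :
    log (cubicGenFun x) =
      ∑' i : ℕ, -log (1 - x ^ (i + 1)) + ∑' i : ℕ, -log (1 - (x ^ 2) ^ (i + 1)) := by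
  have hx2 : x ^ 2 < 1 := by nlinarith
  have hfactor : ∀ i : ℕ, 0 < 1 / ((1 - x ^ (i + 1)) * (1 - x ^ (2 * (i + 1)))) ∧
      log (1 / ((1 - x ^ (i + 1)) * (1 - x ^ (2 * (i + 1))))) =
        -log (1 - x ^ (i + 1)) + -log (1 - (x ^ 2) ^ (i + 1)) := fun i => by
    have h1i := one_sub_pow_succ_pos h0 h1 i
    have h2i := one_sub_pow_succ_pos (sq_nonneg x) hx2 i
    rw [pow_mul]
    exact ⟨by positivity, by rw [one_div, log_inv, log_mul h1i.ne' h2i.ne']; ring⟩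
  have hlog := ((hasSum_neg_log_one_sub_pow_succ h0 h1).summable.hasSum.add
    (hasSum_neg_log_one_sub_pow_succ (sq_nonneg x) hx2).summable.hasSum).congr_fun
    fun i => (hfactor i).2
  rw [cubicGenFun, (hasProd_of_hasSum_log (fun i => (hfactor i).1) hlog).tprod_eq, log_exp]

open Real in
theorem log_cubicGenFun_le (x : ℝ) (h0 : 0 < x) (h1 : x < 1) :
    Real.log (cubicGenFun x) ≤ π ^ 2 / 4 * (x / (1 - x)) := by
  have hsq : x ^ 2 / (1 - x ^ 2) ≤ x / (1 - x) / 2 := by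
    rw [div_div, div_le_div_iff₀ (by nlinarith) (by linarith)]
    nlinarith [mul_nonneg h0.le (sq_nonneg (1 - x))]
  rw [log_cubicGenFun_eq h0.le h1]
  calc _ ≤ π ^ 2 / 6 * (x / (1 - x)) + π ^ 2 / 6 * (x ^ 2 / (1 - x ^ 2)) :=
        add_le_add (tsum_neg_log_one_sub_pow_succ_le h0.le h1)
          (tsum_neg_log_one_sub_pow_succ_le (by positivity) (by nlinarith))
    _ ≤ π ^ 2 / 4 * (x / (1 - x)) := by
        nlinarith [mul_le_mul_of_nonneg_left hsq (by positivity : (0 : ℝ) ≤ π ^ 2 / 6)]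
end

section
/- For every positive integer n and every real number t > 0, log a(n) < π²/(4t) + n·t, where a is the cubic partition function. -/
open Finset Real

namespace Nat.Partition

lemma parts_toFinset_subset_Icc_s16 {n N : ℕ} (P : n.Partition) (hN : n ≤ N) :
    P.parts.toFinset ⊆ Icc 1 N := fun k hk => by
  rw [Multiset.mem_toFinset] at hk
  exact mem_Icc.2 ⟨P.parts_pos hk, (le_of_mem_parts hk).trans hN⟩

lemma pow_eq_prod_Icc_pow_count {M : Type*} [CommMonoid M] (x : M) {n N : ℕ} (P : n.Partition)
    (hN : n ≤ N) : x ^ n = ∏ k ∈ Icc 1 N, (x ^ k) ^ P.parts.count k := by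
  conv_lhs =>
    rw [← P.parts_sum, sum_multiset_count_of_subset _ _ (P.parts_toFinset_subset_Icc_s16 hN)]
  simp only [smul_eq_mul, ← pow_mul, prod_pow_eq_pow_sum, mul_comm]

lemma count_parts_le_s16 {n : ℕ} (P : n.Partition) (k : ℕ) : P.parts.count k ≤ n := by
  have hcard : P.parts.card • 1 ≤ P.parts.sum :=
    Multiset.card_nsmul_le_sum fun _ h => P.parts_pos h
  rw [P.parts_sum, smul_eq_mul, mul_one] at hcard
  exact (Multiset.count_le_card _ _).trans hcard

lemma sigma_ext {P Q : Σ n : ℕ, n.Partition} (h : P.2.parts = Q.2.parts) : P = Q := by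
  obtain ⟨n, P⟩ := P
  obtain ⟨m, Q⟩ := Q
  obtain rfl : n = m := by rw [← P.parts_sum, ← Q.parts_sum, h]
  exact congrArg _ (Nat.Partition.ext h)

lemma sigma_eq_of_count_eq {N : ℕ} {P Q : Σ n : ℕ, n.Partition} (hP : P.1 ≤ N)
    (hQ : Q.1 ≤ N) (h : ∀ k ∈ Icc 1 N, P.2.parts.count k = Q.2.parts.count k) : P = Q := by
  refine sigma_ext (Multiset.ext.2 fun k => ?_)
  by_cases hk : k ∈ Icc 1 N
  · exact h k hk
  · have hnot {n : ℕ} (R : n.Partition) (hR : n ≤ N) : k ∉ R.parts := fun hkR =>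
      hk (R.parts_toFinset_subset_Icc_s16 hR (Multiset.mem_toFinset.2 hkR))
    rw [Multiset.count_eq_zero_of_notMem (hnot _ hP), Multiset.count_eq_zero_of_notMem (hnot _ hQ)]

end Nat.Partition

noncomputable def truncPartitionGenFun (N : ℕ) (x : ℝ) : ℝ :=
  ∑ j ∈ range (N + 1), (Fintype.card j.Partition : ℝ) * x ^ j

lemma truncPartitionGenFun_nonneg (N : ℕ) {x : ℝ} (hx : 0 ≤ x) :
    0 ≤ truncPartitionGenFun N x :=
  sum_nonneg fun _ _ => by positivity

theorem truncPartitionGenFun_le_prod {x : ℝ} (hx0 : 0 ≤ x) (hx1 : x < 1) (N : ℕ) :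
    truncPartitionGenFun N x ≤ ∏ k ∈ Icc 1 N, (1 - x ^ k)⁻¹ := by
  classical
  let S : Finset (Σ j : ℕ, j.Partition) := (range (N + 1)).sigma fun _ => univ
  let mult : (Σ j : ℕ, j.Partition) → Icc 1 N → ℕ := fun P k => P.2.parts.count (k : ℕ)
  have hS : ∀ P ∈ S, P.1 ≤ N := fun P hP => by simpa [S, Nat.lt_succ_iff] using hP
  have hmaps : ∀ P ∈ S, mult P ∈ Fintype.piFinset fun _ => range (N + 1) := fun P hP => by
    simp only [Fintype.mem_piFinset, mem_range]
    exact fun k => Nat.lt_succ_of_le ((P.2.count_parts_le_s16 k).trans (hS P hP))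
  have hinj : Set.InjOn mult S := fun P hP Q hQ hPQ =>
    Nat.Partition.sigma_eq_of_count_eq (hS P hP) (hS Q hQ) fun k hk => congrFun hPQ ⟨k, hk⟩
  have hweight (P) (hP : P ∈ S) : x ^ P.1 = ∏ k : Icc 1 N, (x ^ (k : ℕ)) ^ mult P k := by
    rw [prod_coe_sort (Icc 1 N) fun k => (x ^ k) ^ P.2.parts.count k]
    exact P.2.pow_eq_prod_Icc_pow_count x (hS P hP)
  calc truncPartitionGenFun N x = ∑ P ∈ S, x ^ P.1 := by
        simp [truncPartitionGenFun, S, sum_sigma]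
    _ = ∑ f ∈ S.image mult, ∏ k : Icc 1 N, (x ^ (k : ℕ)) ^ f k := by
        rw [sum_image hinj]; exact sum_congr rfl hweight
    _ ≤ ∑ f ∈ Fintype.piFinset fun _ => range (N + 1),
          ∏ k : Icc 1 N, (x ^ (k : ℕ)) ^ f k :=
        sum_le_sum_of_subset_of_nonneg (image_subset_iff.2 hmaps) fun _ _ _ => by positivity
    _ = ∏ k : Icc 1 N, ∑ m ∈ range (N + 1), (x ^ (k : ℕ)) ^ m := (prod_univ_sum _ _).symm
    _ ≤ ∏ k : Icc 1 N, (1 - x ^ (k : ℕ))⁻¹ := by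
        refine prod_le_prod (fun _ _ => by positivity) fun k _ => ?_
        have hxk : x ^ (k : ℕ) < 1 :=
          pow_lt_one₀ hx0 hx1 (Nat.one_le_iff_ne_zero.1 (mem_Icc.1 k.2).1)
        have := geom_sum_Ico_le_of_lt_one (m := 0) (n := N + 1) (by positivity) hxk
        rwa [pow_zero, one_div, ← range_eq_Ico] at this
    _ = ∏ k ∈ Icc 1 N, (1 - x ^ k)⁻¹ := prod_coe_sort _ fun k => (1 - x ^ k)⁻¹

lemma exp_neg_pow_lt_one {s : ℝ} (hs : 0 < s) {k : ℕ} (hk : 0 < k) : exp (-s) ^ k < 1 :=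
  pow_lt_one₀ (exp_pos _).le (exp_lt_one_iff.2 (neg_lt_zero.2 hs)) hk.ne'

lemma sum_Icc_exp_neg_pow_lt (n : ℕ) {u : ℝ} (hu : 0 < u) :
    ∑ k ∈ Icc 1 n, exp (-u) ^ k < u⁻¹ := by
  set r := exp (-u)
  have hr0 : 0 < r := exp_pos _
  have hr1 : r < 1 := exp_lt_one_iff.2 (neg_lt_zero.2 hu)
  have hgeom : ∑ k ∈ Icc 1 n, r ^ k ≤ r ^ 1 / (1 - r) := by
    rw [← Ico_add_one_right_eq_Icc]
    exact geom_sum_Ico_le_of_lt_one hr0.le hr1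
  have hru : u * r < 1 - r := by
    have hexp : r * exp u = 1 := by rw [← exp_add, neg_add_cancel, exp_zero]
    nlinarith [add_one_lt_exp hu.ne']
  refine hgeom.trans_lt ?_
  rwa [pow_one, div_lt_iff₀ (sub_pos.2 hr1), lt_inv_mul_iff₀ hu]

theorem sum_Icc_neg_log_one_sub_exp_neg_pow_lt (n : ℕ) {s : ℝ} (hs : 0 < s) :
    ∑ k ∈ Icc 1 n, -log (1 - exp (-s) ^ k) < π ^ 2 / 6 / s := by
  have hlog : HasSum (fun m : ℕ => ∑ k ∈ Icc 1 n, (exp (-s) ^ k) ^ (m + 1) / (m + 1))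
      (∑ k ∈ Icc 1 n, -log (1 - exp (-s) ^ k)) := by
    refine hasSum_sum fun k hk => hasSum_pow_div_log_of_abs_lt_one ?_
    rw [abs_of_pos (by positivity)]
    exact exp_neg_pow_lt_one hs (mem_Icc.1 hk).1
  have hbasel : HasSum (fun m : ℕ => 1 / ((m : ℝ) + 1) ^ 2 / s) (π ^ 2 / 6 / s) := by
    have := (hasSum_nat_add_iff' 1).2 hasSum_zeta_two
    simpa using this.div_const s
  have hterm (m : ℕ) :
      ∑ k ∈ Icc 1 n, (exp (-s) ^ k) ^ (m + 1) / (m + 1) < 1 / ((m : ℝ) + 1) ^ 2 / s := by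
    have hm : (0 : ℝ) < m + 1 := by positivity
    have hpow (k : ℕ) : (exp (-s) ^ k) ^ (m + 1) = exp (-((m + 1) * s)) ^ k := by
      rw [← pow_mul, mul_comm, pow_mul, ← exp_nat_mul]
      push_cast
      ring_nf
    calc ∑ k ∈ Icc 1 n, (exp (-s) ^ k) ^ (m + 1) / (m + 1)
        = (∑ k ∈ Icc 1 n, exp (-((m + 1) * s)) ^ k) / (m + 1) := by
          rw [sum_div]; simp only [hpow]
      _ < ((m + 1) * s)⁻¹ / (m + 1) := by
          gcongr; exact sum_Icc_exp_neg_pow_lt n (by positivity)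
      _ = 1 / ((m : ℝ) + 1) ^ 2 / s := by field_simp
  exact hasSum_lt (fun m => (hterm m).le) (hterm 0) hlog hbasel

theorem truncPartitionGenFun_exp_neg_lt (n : ℕ) {s : ℝ} (hs : 0 < s) :
    truncPartitionGenFun n (exp (-s)) < exp (π ^ 2 / 6 / s) := calc
  _ ≤ ∏ k ∈ Icc 1 n, (1 - exp (-s) ^ k)⁻¹ :=
      truncPartitionGenFun_le_prod (exp_pos _).le (exp_lt_one_iff.2 (neg_lt_zero.2 hs)) n
  _ = exp (∑ k ∈ Icc 1 n, -log (1 - exp (-s) ^ k)) := by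
      rw [exp_sum]
      exact prod_congr rfl fun k hk => by
        rw [exp_neg (log _), exp_log (sub_pos.2 (exp_neg_pow_lt_one hs (mem_Icc.1 hk).1))]
  _ < exp (π ^ 2 / 6 / s) := exp_lt_exp.2 (sum_Icc_neg_log_one_sub_exp_neg_pow_lt n hs)

lemma cubicPartition_mul_pow_le_s16 (n : ℕ) {x : ℝ} (hx : 0 ≤ x) :
    cubicPartition n * x ^ n ≤ truncPartitionGenFun n (x ^ 2) * truncPartitionGenFun n x := by
  have hB (l : ℕ) (hl : l ≤ n) :
      (Fintype.card l.Partition : ℝ) * x ^ l ≤ truncPartitionGenFun n x :=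
    single_le_sum (s := range (n + 1)) (f := fun l => (Fintype.card l.Partition : ℝ) * x ^ l)
      (fun _ _ => by positivity) (mem_range.2 (Nat.lt_succ_of_le hl))
  calc (cubicPartition n : ℝ) * x ^ n
      = ∑ j ∈ range (n / 2 + 1), (Fintype.card j.Partition : ℝ) * (x ^ 2) ^ j *
          ((Fintype.card (n - 2 * j).Partition : ℝ) * x ^ (n - 2 * j)) := by
        rw [cubicPartition, Nat.cast_sum, sum_mul]
        refine sum_congr rfl fun j hj => ?_
        have h2j : 2 * j ≤ n := by have := mem_range.1 hj; omega
        have hxn : x ^ n = (x ^ 2) ^ j * x ^ (n - 2 * j) := by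
          rw [← pow_mul, ← pow_add, Nat.add_sub_cancel' h2j]
        rw [hxn, Nat.cast_mul]
        ring
    _ ≤ ∑ j ∈ range (n / 2 + 1),
          (Fintype.card j.Partition : ℝ) * (x ^ 2) ^ j * truncPartitionGenFun n x :=
        sum_le_sum fun j _ => mul_le_mul_of_nonneg_left (hB _ (Nat.sub_le _ _)) (by positivity)
    _ ≤ ∑ j ∈ range (n + 1),
          (Fintype.card j.Partition : ℝ) * (x ^ 2) ^ j * truncPartitionGenFun n x :=
        sum_le_sum_of_subset_of_nonneg (range_subset_range.2 (by omega)) fun _ _ _ =>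
          mul_nonneg (by positivity) (truncPartitionGenFun_nonneg n hx)
    _ = truncPartitionGenFun n (x ^ 2) * truncPartitionGenFun n x := (sum_mul _ _ _).symm

lemma cubicPartition_pos (n : ℕ) : 0 < cubicPartition n :=
  sum_pos (fun _ _ => Nat.mul_pos Fintype.card_pos Fintype.card_pos) nonempty_range_add_one

open Real in
theorem log_cubicPartition_lt_general (n : ℕ) (t : ℝ) (ht : 0 < t) :
    Real.log (cubicPartition n) < π ^ 2 / (4 * t) + n * t := by
  have hsq : exp (-t) ^ 2 = exp (-(2 * t)) := by rw [← exp_nat_mul]; ring_nf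
  have hbound : cubicPartition n * exp (-t) ^ n < exp (π ^ 2 / (4 * t)) := calc
    _ ≤ truncPartitionGenFun n (exp (-t) ^ 2) * truncPartitionGenFun n (exp (-t)) :=
        cubicPartition_mul_pow_le_s16 n (exp_pos _).le
    _ < exp (π ^ 2 / 6 / (2 * t)) * exp (π ^ 2 / 6 / t) := by
        rw [hsq]
        exact mul_lt_mul'' (truncPartitionGenFun_exp_neg_lt n (by positivity))
          (truncPartitionGenFun_exp_neg_lt n ht)
          (truncPartitionGenFun_nonneg n (by positivity))
          (truncPartitionGenFun_nonneg n (by positivity))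
    _ = exp (π ^ 2 / (4 * t)) := by rw [← exp_add]; congr 1; field_simp; ring
  have hpow : exp (-t) ^ n = (exp (n * t))⁻¹ := by rw [← exp_nat_mul, ← exp_neg]; ring_nf
  rw [hpow] at hbound
  rw [log_lt_iff_lt_exp (by exact_mod_cast cubicPartition_pos n), exp_add]
  exact (mul_inv_lt_iff₀ (exp_pos _)).1 hbound

open Real in
theorem log_cubicPartition_lt (n : ℕ) (hn : 0 < n) (t : ℝ) (ht : 0 < t) :
    Real.log (cubicPartition n) < π ^ 2 / (4 * t) + n * t :=
  log_cubicPartition_lt_general n t ht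
end
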